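/- Let Y⃗, S, R be random variables on a common probability space taking values in finite types. Suppose (i) Y⃗ and R are conditionally independent given S, (ii) the map sending each value σ of S with P(S = σ) > 0 to the conditional distribution of Y⃗ given S = σ is injective, and (iii) I[Y⃗ ; R] = I[Y⃗ ; S]. Then H[S | R] = 0; that is, S is almost surely determined by R. -/

import Mathlib

open MeasureTheory Real
open scoped Classical

/-- Probability of an event. -/
noncomputable def pr {Ω : Type*} [MeasurableSpace Ω] (μ : Measure Ω) (A : Set Ω) : ℝ :=
  (μ A).toReal

/-- Conditional probability of `A` given `B`. -/
noncomputable def cpr {Ω : Type*} [MeasurableSpace Ω] (μ : Measure Ω) (A B : Set Ω) : ℝ :=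
  pr μ (A ∩ B) / pr μ B

/-- `X` and `W` are conditionally independent given `Z` (finite-valued form):
for all values, `P(X = x ∧ W = w ∧ Z = z) ⬝ P(Z = z) = P(X = x ∧ Z = z) ⬝ P(W = w ∧ Z = z)`. -/
def CondIndepGiven {Ω α β γ : Type*} [MeasurableSpace Ω] (μ : Measure Ω)
    (X : Ω → α) (Z : Ω → γ) (W : Ω → β) : Prop :=
  ∀ (x : α) (z : γ) (w : β),
    pr μ {ω | X ω = x ∧ W ω = w ∧ Z ω = z} * pr μ {ω | Z ω = z} =
      pr μ {ω | X ω = x ∧ Z ω = z} * pr μ {ω | W ω = w ∧ Z ω = z}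

/-- Shannon entropy (in nats) of a finite-valued random variable. -/
noncomputable def ent {Ω α : Type*} [MeasurableSpace Ω] [Fintype α]
    (μ : Measure Ω) (X : Ω → α) : ℝ :=
  -∑ x, pr μ {ω | X ω = x} * Real.log (pr μ {ω | X ω = x})

/-- Shannon entropy of the conditional distribution of `X` given the event `E`. -/
noncomputable def condEntEvent {Ω α : Type*} [MeasurableSpace Ω] [Fintype α]
    (μ : Measure Ω) (X : Ω → α) (E : Set Ω) : ℝ :=
  -∑ x, cpr μ {ω | X ω = x} E * Real.log (cpr μ {ω | X ω = x} E)

/-- Conditional Shannon entropy `H[X | Y]` of finite-valued random variables. -/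
noncomputable def condEnt {Ω α β : Type*} [MeasurableSpace Ω] [Fintype α] [Fintype β]
    (μ : Measure Ω) (X : Ω → α) (Y : Ω → β) : ℝ :=
  ∑ y, pr μ {ω | Y ω = y} * condEntEvent μ X {ω | Y ω = y}

/-- Mutual information `I[X ; Y] = H[X] - H[X | Y]`. -/
noncomputable def mutInfo {Ω α β : Type*} [MeasurableSpace Ω] [Fintype α] [Fintype β]
    (μ : Measure Ω) (X : Ω → α) (Y : Ω → β) : ℝ :=
  ent μ X - condEnt μ X Y

/-! Conditional independence of `Yfut` and `R` given `S` factors the joint law as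
`P(y, r, s) = P(r, s) P(y | s)`, which turns
`∑ P(r, s) P(y | s) log (P(y | s) / P(y | r))` into `H[Yfut | R] - H[Yfut | S] = 0`.
This is a Kullback–Leibler divergence, so by the equality case of Gibbs' inequality
`P(· | s) = P(· | r)` whenever `P(r, s) > 0`. Two values of `S` in the same fibre of `R` thus
predict the same future and coincide by (ii); each fibre of `R` carries one causal state and
`H[S | R] = 0`. -/

open Finset InformationTheory

lemma mul_log_div_mul_eq_sub {c a b : ℝ} (h : c * a ≠ 0 → b ≠ 0) :
    c * a * log (c * a / (c * b)) = c * a * log a - c * a * log b := by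
  by_cases hca : c * a = 0
  · simp [hca]
  · obtain ⟨hc, ha⟩ := mul_ne_zero_iff.mp hca
    rw [mul_div_mul_left _ _ hc, log_div ha (h hca), mul_sub]

-- The terms `q i * klFun (p i / q i)` are nonnegative and sum to
-- `∑ p log (p / q) + ∑ q - ∑ p ≤ 0`.
lemma eq_of_sum_mul_log_div_nonpos {ι : Type*} [Fintype ι] {p q : ι → ℝ}
    (hp : ∀ i, 0 ≤ p i) (hq : ∀ i, 0 ≤ q i) (hpq : ∀ i, q i = 0 → p i = 0)
    (hsum : ∑ i, q i ≤ ∑ i, p i) (hKL : ∑ i, p i * log (p i / q i) ≤ 0) (i : ι) :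
    p i = q i := by
  have hterm : ∀ i, q i * klFun (p i / q i) = p i * log (p i / q i) + q i - p i := by
    intro i
    rcases (hq i).eq_or_lt with h0 | hpos
    · simp [← h0, hpq i h0.symm]
    · rw [klFun_apply]
      field_simp
  have hnonneg : ∀ i ∈ univ, 0 ≤ q i * klFun (p i / q i) := fun i _ =>
    mul_nonneg (hq i) (klFun_nonneg (div_nonneg (hp i) (hq i)))
  have hzero : ∑ i, q i * klFun (p i / q i) = 0 := by
    refine le_antisymm ?_ (sum_nonneg hnonneg)
    simp only [hterm, sum_sub_distrib, sum_add_distrib]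
    linarith
  rcases (hq i).eq_or_lt with h0 | hpos
  · rw [← h0, hpq i h0.symm]
  · have hi := (sum_eq_zero_iff_of_nonneg hnonneg).mp hzero i (mem_univ i)
    rw [mul_eq_zero, or_iff_right hpos.ne', klFun_eq_zero_iff (div_nonneg (hp i) hpos.le),
      div_eq_one_iff_eq hpos.ne'] at hi
    exact hi

section Probability

variable {Ω : Type*} [MeasurableSpace Ω] {μ : Measure Ω}

lemma pr_nonneg (A : Set Ω) : 0 ≤ pr μ A := ENNReal.toReal_nonneg

lemma cpr_nonneg (A B : Set Ω) : 0 ≤ cpr μ A B := div_nonneg (pr_nonneg _) (pr_nonneg _)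

variable [IsFiniteMeasure μ]

lemma pr_mono {A B : Set Ω} (h : A ⊆ B) : pr μ A ≤ pr μ B :=
  ENNReal.toReal_mono (measure_ne_top μ B) (measure_mono h)

lemma pr_inter_eq_mul_cpr (A B : Set Ω) : pr μ (A ∩ B) = pr μ B * cpr μ A B := by
  rcases (pr_nonneg (μ := μ) B).eq_or_lt with hB | hB
  · rw [← hB, zero_mul]
    exact le_antisymm (hB ▸ pr_mono Set.inter_subset_right) (pr_nonneg _)
  · rw [cpr, mul_div_cancel₀ _ hB.ne']

lemma sum_pr_preimage_inter {α : Type*} [Fintype α] [MeasurableSpace α]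
    [MeasurableSingletonClass α] {X : Ω → α} (hX : Measurable X) (E : Set Ω) :
    ∑ x, pr μ ({ω | X ω = x} ∩ E) = pr μ E := by
  have h := sum_measure_preimage_singleton (μ := μ.restrict E) univ
    (fun x _ => hX (measurableSet_singleton x))
  simp only [coe_univ, Set.preimage_univ, Measure.restrict_apply_univ,
    Measure.restrict_apply (hX (measurableSet_singleton _))] at h
  rw [pr, ← h, ENNReal.toReal_sum fun x _ => measure_ne_top μ _]
  rfl

lemma sum_cpr_preimage {α : Type*} [Fintype α] [MeasurableSpace α]
    [MeasurableSingletonClass α] {X : Ω → α} (hX : Measurable X) (E : Set Ω) :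
    ∑ x, cpr μ {ω | X ω = x} E = pr μ E / pr μ E := by
  simp only [cpr, ← sum_div, sum_pr_preimage_inter hX E]

lemma condEnt_eq_zero_of_fiber_subsingleton {β γ : Type*} [Fintype β] [Fintype γ]
    [MeasurableSpace γ] [MeasurableSingletonClass γ] {Z : Ω → γ} (hZ : Measurable Z)
    (W : Ω → β)
    (h : ∀ w z z', 0 < pr μ ({ω | Z ω = z} ∩ {ω | W ω = w}) →
      0 < pr μ ({ω | Z ω = z'} ∩ {ω | W ω = w}) → z = z') :
    condEnt μ Z W = 0 := by
  refine sum_eq_zero fun w _ => mul_eq_zero_of_right _ ?_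
  rw [condEntEvent, neg_eq_zero]
  refine sum_eq_zero fun z _ => ?_
  rcases (pr_nonneg (μ := μ) ({ω | Z ω = z} ∩ {ω | W ω = w})).eq_or_lt with h0 | hpos
  · rw [cpr, ← h0, zero_div, zero_mul]
  · have hfiber : pr μ ({ω | Z ω = z} ∩ {ω | W ω = w}) = pr μ {ω | W ω = w} := by
      rw [← sum_pr_preimage_inter hZ {ω | W ω = w}, sum_eq_single z _ (by simp)]
      intro z' _ hz'
      by_contra hne
      exact hz' (h w z' z ((pr_nonneg _).lt_of_ne' hne) hpos)
    rw [cpr, hfiber, div_self (hfiber ▸ hpos).ne', log_one, mul_zero]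

end Probability

section CondIndep

variable {Ω α β γ : Type*} [MeasurableSpace Ω] {μ : Measure Ω} [IsFiniteMeasure μ]
  {X : Ω → α} {Z : Ω → γ} {W : Ω → β}

lemma CondIndepGiven.pr_inter_inter_eq (hCI : CondIndepGiven μ X Z W) (x : α) (w : β) (z : γ) :
    pr μ ({ω | X ω = x} ∩ ({ω | W ω = w} ∩ {ω | Z ω = z})) =
      pr μ ({ω | W ω = w} ∩ {ω | Z ω = z}) * cpr μ {ω | X ω = x} {ω | Z ω = z} := by
  rcases (pr_nonneg (μ := μ) {ω | Z ω = z}).eq_or_lt with h0 | hpos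
  · rw [cpr, ← h0, div_zero, mul_zero]
    exact le_antisymm (h0 ▸ pr_mono fun ω hω => hω.2.2) (pr_nonneg _)
  · rw [cpr, mul_div_assoc', eq_div_iff hpos.ne']
    exact (hCI x z w).trans (mul_comm _ _)

lemma CondIndepGiven.pr_inter_mul_cpr_eq_zero (hCI : CondIndepGiven μ X Z W) {x : α} {w : β}
    (hxw : cpr μ {ω | X ω = x} {ω | W ω = w} = 0) (z : γ) :
    pr μ ({ω | W ω = w} ∩ {ω | Z ω = z}) * cpr μ {ω | X ω = x} {ω | Z ω = z} = 0 := by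
  rw [← hCI.pr_inter_inter_eq]
  refine le_antisymm ?_ (pr_nonneg _)
  calc pr μ ({ω | X ω = x} ∩ ({ω | W ω = w} ∩ {ω | Z ω = z}))
      ≤ pr μ ({ω | X ω = x} ∩ {ω | W ω = w}) :=
        pr_mono (Set.inter_subset_inter_right _ Set.inter_subset_left)
    _ = 0 := by rw [pr_inter_eq_mul_cpr, hxw, mul_zero]

variable [Fintype α] [Fintype β] [Fintype γ]

lemma sum_mul_log_cpr_self_eq_neg_condEnt [MeasurableSpace β] [MeasurableSingletonClass β]
    (hW : Measurable W) :
    ∑ w, ∑ z, ∑ x, pr μ ({ω | W ω = w} ∩ {ω | Z ω = z}) * cpr μ {ω | X ω = x} {ω | Z ω = z} *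
      log (cpr μ {ω | X ω = x} {ω | Z ω = z}) = -condEnt μ X Z := by
  simp only [condEnt, condEntEvent, mul_neg, sum_neg_distrib, neg_neg]
  rw [sum_comm]
  refine sum_congr rfl fun z _ => ?_
  rw [← sum_pr_preimage_inter hW {ω | Z ω = z}, sum_mul]
  simp only [mul_sum, mul_assoc]

lemma CondIndepGiven.sum_mul_log_cpr_eq_neg_condEnt (hCI : CondIndepGiven μ X Z W)
    [MeasurableSpace γ] [MeasurableSingletonClass γ] (hZ : Measurable Z) :
    ∑ w, ∑ z, ∑ x, pr μ ({ω | W ω = w} ∩ {ω | Z ω = z}) * cpr μ {ω | X ω = x} {ω | Z ω = z} *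
      log (cpr μ {ω | X ω = x} {ω | W ω = w}) = -condEnt μ X W := by
  simp only [condEnt, condEntEvent, mul_neg, sum_neg_distrib, neg_neg]
  refine sum_congr rfl fun w _ => ?_
  rw [sum_comm, mul_sum]
  refine sum_congr rfl fun x _ => ?_
  rw [← sum_mul, ← mul_assoc, ← pr_inter_eq_mul_cpr]
  congr 1
  simp only [← hCI.pr_inter_inter_eq, ← Set.inter_assoc]
  simp only [Set.inter_comm _ {ω | Z ω = _}]
  exact sum_pr_preimage_inter hZ _

lemma CondIndepGiven.sum_mul_log_div_eq_condEnt_sub (hCI : CondIndepGiven μ X Z W)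
    [MeasurableSpace β] [MeasurableSingletonClass β] [MeasurableSpace γ]
    [MeasurableSingletonClass γ] (hZ : Measurable Z) (hW : Measurable W) :
    ∑ w, ∑ z, ∑ x, pr μ ({ω | W ω = w} ∩ {ω | Z ω = z}) * cpr μ {ω | X ω = x} {ω | Z ω = z} *
      log (pr μ ({ω | W ω = w} ∩ {ω | Z ω = z}) * cpr μ {ω | X ω = x} {ω | Z ω = z} /
        (pr μ ({ω | W ω = w} ∩ {ω | Z ω = z}) * cpr μ {ω | X ω = x} {ω | W ω = w})) =
      condEnt μ X W - condEnt μ X Z := by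
  have hsplit : ∀ w z x, _ := fun w z x => mul_log_div_mul_eq_sub fun h hxw =>
    h (hCI.pr_inter_mul_cpr_eq_zero (x := x) (w := w) hxw z)
  simp only [hsplit, sum_sub_distrib, sum_mul_log_cpr_self_eq_neg_condEnt hW,
    hCI.sum_mul_log_cpr_eq_neg_condEnt hZ, sub_neg_eq_add, neg_add_eq_sub]

lemma CondIndepGiven.cpr_eq_of_condEnt_le (hCI : CondIndepGiven μ X Z W)
    [MeasurableSpace α] [MeasurableSingletonClass α] [MeasurableSpace β]
    [MeasurableSingletonClass β] [MeasurableSpace γ] [MeasurableSingletonClass γ]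
    (hX : Measurable X) (hZ : Measurable Z) (hW : Measurable W)
    (hle : condEnt μ X W ≤ condEnt μ X Z) {w : β} {z : γ}
    (hwz : 0 < pr μ ({ω | W ω = w} ∩ {ω | Z ω = z})) (x : α) :
    cpr μ {ω | X ω = x} {ω | Z ω = z} = cpr μ {ω | X ω = x} {ω | W ω = w} := by
  have hgibbs := eq_of_sum_mul_log_div_nonpos
    (p := fun i : β × γ × α => pr μ ({ω | W ω = i.1} ∩ {ω | Z ω = i.2.1}) *
      cpr μ {ω | X ω = i.2.2} {ω | Z ω = i.2.1})
    (q := fun i => pr μ ({ω | W ω = i.1} ∩ {ω | Z ω = i.2.1}) *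
      cpr μ {ω | X ω = i.2.2} {ω | W ω = i.1})
    (fun _ => mul_nonneg (pr_nonneg _) (cpr_nonneg _ _))
    (fun _ => mul_nonneg (pr_nonneg _) (cpr_nonneg _ _)) ?dom ?sum ?kl (w, z, x)
  · exact mul_left_cancel₀ hwz.ne' hgibbs
  case dom =>
    rintro ⟨w, z, x⟩ hq
    rcases mul_eq_zero.mp hq with h | h
    · simp only [h, zero_mul]
    · exact hCI.pr_inter_mul_cpr_eq_zero h z
  case sum =>
    simp only [Fintype.sum_prod_type]
    refine sum_le_sum fun w _ => sum_le_sum fun z _ => ?_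
    rw [← mul_sum, ← mul_sum, sum_cpr_preimage hX, sum_cpr_preimage hX]
    rcases (pr_nonneg (μ := μ) ({ω | W ω = w} ∩ {ω | Z ω = z})).eq_or_lt with h0 | hpos
    · simp only [← h0, zero_mul, le_refl]
    · have hZpos : 0 < pr μ {ω | Z ω = z} := hpos.trans_le (pr_mono Set.inter_subset_right)
      rw [div_self hZpos.ne', mul_one]
      exact mul_le_of_le_one_right hpos.le (div_self_le_one _)
  case kl =>
    simp only [Fintype.sum_prod_type]
    rw [hCI.sum_mul_log_div_eq_condEnt_sub hZ hW]
    linarith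

end CondIndep

theorem equality_case_determines_causal_state_general
    {Ω B C D : Type*} [MeasurableSpace Ω]
    [MeasurableSpace B] [DiscreteMeasurableSpace B] [Fintype B]
    [MeasurableSpace C] [DiscreteMeasurableSpace C] [Fintype C]
    [MeasurableSpace D] [DiscreteMeasurableSpace D] [Fintype D]
    (μ : Measure Ω) [IsProbabilityMeasure μ]
    (Yfut : Ω → B) (S : Ω → C) (R : Ω → D)
    (hYfut : Measurable Yfut) (hS : Measurable S) (hR : Measurable R)
    (hCI : CondIndepGiven μ Yfut S R)
    (hinj : ∀ σ σ' : C, 0 < pr μ {ω | S ω = σ} → 0 < pr μ {ω | S ω = σ'} →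
      (∀ y : B, cpr μ {ω | Yfut ω = y} {ω | S ω = σ} =
        cpr μ {ω | Yfut ω = y} {ω | S ω = σ'}) → σ = σ')
    (hMI : mutInfo μ Yfut R = mutInfo μ Yfut S) :
    condEnt μ S R = 0 := by
  have hle : condEnt μ Yfut R ≤ condEnt μ Yfut S := (sub_right_inj.mp hMI).le
  refine condEnt_eq_zero_of_fiber_subsingleton hS R fun r s s' hs hs' => ?_
  rw [Set.inter_comm] at hs hs'
  refine hinj s s' (hs.trans_le (pr_mono Set.inter_subset_right))
    (hs'.trans_le (pr_mono Set.inter_subset_right)) fun y => ?_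
  rw [hCI.cpr_eq_of_condEnt_le hYfut hS hR hle hs, hCI.cpr_eq_of_condEnt_le hYfut hS hR hle hs']

/-- Suppose (i) `Yfut` and `R` are conditionally independent given `S`,
(ii) distinct values of `S` of positive probability have distinct conditional distributions of
`Yfut`, and (iii) `I[Yfut ; R] = I[Yfut ; S]`. Then `H[S | R] = 0`: `S` is almost surely
determined by `R`. -/
theorem equality_case_determines_causal_state
    {Ω B C D : Type*} [MeasurableSpace Ω]
    [MeasurableSpace B] [DiscreteMeasurableSpace B] [Fintype B] [Nonempty B]
    [MeasurableSpace C] [DiscreteMeasurableSpace C] [Fintype C] [Nonempty C]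
    [MeasurableSpace D] [DiscreteMeasurableSpace D] [Fintype D] [Nonempty D]
    (μ : Measure Ω) [IsProbabilityMeasure μ]
    (Yfut : Ω → B) (S : Ω → C) (R : Ω → D)
    (hYfut : Measurable Yfut) (hS : Measurable S) (hR : Measurable R)
    (hCI : CondIndepGiven μ Yfut S R)
    (hinj : ∀ σ σ' : C, 0 < pr μ {ω | S ω = σ} → 0 < pr μ {ω | S ω = σ'} →
      (∀ y : B, cpr μ {ω | Yfut ω = y} {ω | S ω = σ} =
        cpr μ {ω | Yfut ω = y} {ω | S ω = σ'}) → σ = σ')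
    (hMI : mutInfo μ Yfut R = mutInfo μ Yfut S) :
    condEnt μ S R = 0 :=
  equality_case_determines_causal_state_general μ Yfut S R hYfut hS hR hCI hinj hMI
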